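/- For every ε > 0 and every z ∈ ℂ\{0}, w ∈ ℂ (writing z = z₁ + iz₂, w = w₁ + iw₂), the Levi-Civita transformed Stark Hamiltonian separates: |z|² · ( H_ε(z²/2, w/z̄) + 1/2 ) = ( w₁²/2 + z₁²/2 + εz₁⁴/2 ) + ( w₂²/2 + z₂²/2 - εz₂⁴/2 ) - 2, where z̄ is the complex conjugate of z and ℂ is identified with ℝ² via z₁ + iz₂ ↦ (z₁, z₂). -/

import Mathlib

/-!
Under `q = z²/2`, `p = w/z̄` one has `|q| = |z|²/2` and `|p| = |w|/|z|`, so multiplying by `|z|²`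
turns the kinetic term into `|w|²/2`, the Coulomb term into the constant `-2`, and the field term
`ε Re q = ε (z₁² - z₂²)/2` into `ε (z₁⁴ - z₂⁴)/2`; the energy shift `1/2` contributes the harmonic
terms `(z₁² + z₂²)/2`. Every term is then a function of `(z₁, w₁)` or of `(z₂, w₂)` alone.
-/

/-- The Hamiltonian of the planar Stark problem with field strength `ε`, in complex notation
(identifying `ℝ²` with `ℂ` via `(q₁,q₂) ↦ q₁ + iq₂`):
`H_ε(q,p) = |p|²/2 - 1/|q| + ε Re q`, defined for `q ∈ ℂ \ {0}`. -/
noncomputable def starkHamiltonian (ε : ℝ) (q p : ℂ) : ℝ :=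
  ‖p‖ ^ 2 / 2 - 1 / ‖q‖ + ε * q.re

open ComplexConjugate

namespace Complex

lemma norm_sq_div_two (z : ℂ) : ‖z ^ 2 / 2‖ = ‖z‖ ^ 2 / 2 := by
  simp

lemma re_sq_div_two (z : ℂ) : (z ^ 2 / 2).re = (z.re ^ 2 - z.im ^ 2) / 2 := by
  simp [sq, mul_re]

lemma sq_norm_mul_re_sq (z : ℂ) : ‖z‖ ^ 2 * (z.re ^ 2 - z.im ^ 2) = z.re ^ 4 - z.im ^ 4 := by
  rw [Complex.sq_norm, normSq_apply]
  ring

end Complex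

lemma sq_norm_mul_starkHamiltonian_leviCivita (ε : ℝ) {z : ℂ} (hz : z ≠ 0) (w : ℂ) :
    ‖z‖ ^ 2 * starkHamiltonian ε (z ^ 2 / 2) (w / conj z) =
      ‖w‖ ^ 2 / 2 - 2 + ε * (z.re ^ 4 - z.im ^ 4) / 2 := by
  have hz_norm : ‖z‖ ≠ 0 := norm_ne_zero_iff.mpr hz
  rw [starkHamiltonian, Complex.norm_sq_div_two, Complex.re_sq_div_two, norm_div,
    Complex.norm_conj, ← Complex.sq_norm_mul_re_sq]
  field_simp

theorem levi_civita_separates_stark (ε : ℝ) (z w : ℂ) (hz : z ≠ 0) :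
    ‖z‖ ^ 2 *
        (starkHamiltonian ε (z ^ 2 / 2) (w / (starRingEnd ℂ z)) + 1 / 2) =
      (w.re ^ 2 / 2 + z.re ^ 2 / 2 + ε * z.re ^ 4 / 2) +
        (w.im ^ 2 / 2 + z.im ^ 2 / 2 - ε * z.im ^ 4 / 2) - 2 := by
  rw [mul_add, sq_norm_mul_starkHamiltonian_leviCivita ε hz w, Complex.sq_norm, Complex.sq_norm,
    Complex.normSq_apply, Complex.normSq_apply]
  ring
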